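/- arXiv:2312.11168 — 2 statements merged into one kernel-verified Lean document; each statement's English description precedes it below -/
import Mathlib

section
/- Let J be a proper lsc convex function on ℝⁿ, A ∈ ℝ^{m×n}, b₀ ∈ ℝᵐ, x₀ a point with ‖Ax₀ - b‖ ≤ δ. Suppose there exists α > 0 such that ‖Ah‖ ≥ α‖h‖ for all h in the descent cone D_J(x₀). Then any solution x^δ of the problem min J(x) s.t. ‖Ax - b‖ ≤ δ satisfies ‖x^δ - x₀‖ ≤ 2δ/α. -/
def descentCone {E β : Type*} [AddCommGroup E] [Module ℝ E] [LE β] (J : E → β) (x₀ : E) :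
    Set E :=
  {h | ∃ l > (0 : ℝ), ∃ x, J x ≤ J x₀ ∧ h = l • (x - x₀)}

lemma sub_mem_descentCone {E β : Type*} [AddCommGroup E] [Module ℝ E] [LE β] {J : E → β}
    {x x₀ : E} (hx : J x ≤ J x₀) : x - x₀ ∈ descentCone J x₀ :=
  ⟨1, one_pos, x, hx, (one_smul ℝ _).symm⟩

lemma norm_sub_le_two_mul_of_norm_sub_le {E : Type*} [SeminormedAddCommGroup E] {u v b : E}
    {δ : ℝ} (hu : ‖u - b‖ ≤ δ) (hv : ‖v - b‖ ≤ δ) : ‖u - v‖ ≤ 2 * δ :=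
  calc ‖u - v‖ ≤ ‖u - b‖ + ‖v - b‖ := by
        simpa only [dist_eq_norm] using dist_triangle_right u v b
    _ ≤ 2 * δ := by linarith

theorem robust_recovery_bound_of_descent_cone_condition_general
    (n m : ℕ) (J : EuclideanSpace ℝ (Fin n) → EReal)
    (A : EuclideanSpace ℝ (Fin n) →L[ℝ] EuclideanSpace ℝ (Fin m))
    (b : EuclideanSpace ℝ (Fin m)) (δ : ℝ)
    (x₀ : EuclideanSpace ℝ (Fin n)) (hx₀ : ‖A x₀ - b‖ ≤ δ)
    (α : ℝ) (hα : 0 < α)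
    (hcone : ∀ h ∈ {hh | ∃ l > (0 : ℝ), ∃ x, J x ≤ J x₀ ∧ hh = l • (x - x₀)},
      α * ‖h‖ ≤ ‖A h‖)
    (xδ : EuclideanSpace ℝ (Fin n)) (hfeas : ‖A xδ - b‖ ≤ δ)
    (hopt : ∀ x, ‖A x - b‖ ≤ δ → J xδ ≤ J x) :
    ‖xδ - x₀‖ ≤ 2 * δ / α := by
  have hdescent : α * ‖xδ - x₀‖ ≤ ‖A (xδ - x₀)‖ :=
    hcone _ (sub_mem_descentCone (hopt x₀ hx₀))
  have hfit : ‖A (xδ - x₀)‖ ≤ 2 * δ := by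
    rw [map_sub]
    exact norm_sub_le_two_mul_of_norm_sub_le hfeas hx₀
  rw [le_div_iff₀ hα]
  linarith

/-- If `‖Ax₀ - b‖ ≤ δ` and `‖Ah‖ ≥ α‖h‖` for all `h` in the descent cone
`D_J(x₀)`, then any minimizer `x^δ` of `J` over `{x : ‖Ax - b‖ ≤ δ}` satisfies
`‖x^δ - x₀‖ ≤ 2δ/α`. -/
theorem robust_recovery_bound_of_descent_cone_condition
    (n m : ℕ) (J : EuclideanSpace ℝ (Fin n) → EReal)
    (hproper_bot : ∀ x, ⊥ < J x) (hproper_top : ∃ x, J x < ⊤)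
    (hconvex : ∀ x y, ∀ a b : ℝ, 0 ≤ a → 0 ≤ b → a + b = 1 →
      J (a • x + b • y) ≤ (a : EReal) * J x + (b : EReal) * J y)
    (hlsc : LowerSemicontinuous J)
    (A : EuclideanSpace ℝ (Fin n) →L[ℝ] EuclideanSpace ℝ (Fin m))
    (b : EuclideanSpace ℝ (Fin m)) (δ : ℝ)
    (x₀ : EuclideanSpace ℝ (Fin n)) (hx₀ : ‖A x₀ - b‖ ≤ δ)
    (α : ℝ) (hα : 0 < α)
    (hcone : ∀ h ∈ {hh | ∃ l > (0 : ℝ), ∃ x, J x ≤ J x₀ ∧ hh = l • (x - x₀)},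
      α * ‖h‖ ≤ ‖A h‖)
    (xδ : EuclideanSpace ℝ (Fin n)) (hfeas : ‖A xδ - b‖ ≤ δ)
    (hopt : ∀ x, ‖A x - b‖ ≤ δ → J xδ ≤ J x) :
    ‖xδ - x₀‖ ≤ 2 * δ / α :=
  robust_recovery_bound_of_descent_cone_condition_general n m J A b δ x₀ hx₀ α hα hcone xδ hfeas
    hopt
end

section
/- Let J be a lsc gauge, x₀ feasible for min{J(x) : Ax = b₀}, and y₀ with A^T y₀ ∈ ∂J(x₀). If 0 ∈ int[Im A^T - ∂J(x₀)] (the strict Robinson condition), then the solution mapping S_{y₀}(v,w) = {x : v + A^T y₀ ∈ ∂J(x), w = Ax - b₀} is upper Lipschitzian at (0,0): there is κ > 0 such that S_{y₀}(v,w) ⊆ {x₀} + κ(‖v‖ + ‖w‖)𝔹 for all (v,w) near (0,0). -/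
open Set ContinuousLinearMap
open scoped InnerProductSpace Pointwise

/-!
Subgradients of a function finite at `x₀` form a monotone relation, so for `x ∈ S(v, w)` and
every `s ∈ ∂J(x₀)` one gets `⟪s, x - x₀⟫ ≤ ⟪v, x - x₀⟫ + ⟪y₀, w⟫`. The Robinson condition lets
every vertex of a small simplex around `0` be written as `Aᵀz - s` with `s ∈ ∂J(x₀)`; the finitely
many `z` have norms summing to some `R`, and since `⟪·, x - x₀⟫` is linear its lower bound on
the vertices persists on a ball of radius `ρ` inside the simplex; evaluating in the direction
`-(x - x₀)` yields `ρ ‖x - x₀‖ ≤ R ‖w‖ + ‖v‖ ‖x - x₀‖ + ‖y₀‖ ‖w‖`; for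
`‖v‖ < ρ / 2` the middle term is absorbed on the left.
-/

variable {E F : Type*} [NormedAddCommGroup E] [InnerProductSpace ℝ E]
  [NormedAddCommGroup F] [InnerProductSpace ℝ F]

def subgradients (J : E → EReal) (x : E) : Set E :=
  {s | ∀ y, J x + ((⟪s, y - x⟫_ℝ : ℝ) : EReal) ≤ J y}

theorem inner_sub_nonneg_of_mem_subgradients {J : E → EReal} {x₀ x s t : E}
    (hbot : J x₀ ≠ ⊥) (htop : J x₀ ≠ ⊤) (hs : s ∈ subgradients J x₀)
    (ht : t ∈ subgradients J x) : 0 ≤ ⟪t - s, x - x₀⟫_ℝ := by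
  obtain ⟨r₀, hr₀⟩ : ∃ r : ℝ, J x₀ = r := ⟨_, (EReal.coe_toReal htop hbot).symm⟩
  have hx := hs x
  have hx₀ := ht x₀
  rw [hr₀, ← EReal.coe_add] at hx
  rw [hr₀] at hx₀
  have hbot' : J x ≠ ⊥ := ne_bot_of_le_ne_bot (EReal.coe_ne_bot _) hx
  have htop' : J x ≠ ⊤ := by
    rintro h
    rw [h, EReal.top_add_coe, top_le_iff] at hx₀
    exact EReal.coe_ne_top _ hx₀
  obtain ⟨r, hr⟩ : ∃ r : ℝ, J x = r := ⟨_, (EReal.coe_toReal htop' hbot').symm⟩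
  rw [hr, EReal.coe_le_coe_iff] at hx
  rw [hr, ← EReal.coe_add, EReal.coe_le_coe_iff, ← neg_sub x x₀, inner_neg_right] at hx₀
  rw [inner_sub_left]
  linarith

theorem exists_mul_norm_le_of_zero_mem_interior_range_adjoint_sub [FiniteDimensional ℝ E]
    [CompleteSpace F] {A : E →L[ℝ] F} {S : Set E}
    (h : (0 : E) ∈ interior (range (adjoint A) - S)) :
    ∃ ρ > 0, ∃ R ≥ 0, ∀ d : E, ∀ T : ℝ, (∀ s ∈ S, ⟪s, d⟫_ℝ ≤ T) →
      ρ * ‖d‖ ≤ R * ‖A d‖ + T := by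
  obtain ⟨b, hb₀, hbS⟩ :=
    exists_mem_interior_convexHull_affineBasis (mem_interior_iff_mem_nhds.1 h)
  obtain ⟨ρ, hρ, hball⟩ :=
    Metric.nhds_basis_closedBall.mem_iff.1 (mem_interior_iff_mem_nhds.1 hb₀)
  have hrep : ∀ i, ∃ z, ∃ s ∈ S, adjoint A z - s = b i := fun i => by
    obtain ⟨_, ⟨z, rfl⟩, s, hs, he⟩ :=
      Set.mem_sub.1 (hbS (subset_convexHull ℝ _ (mem_range_self i)))
    exact ⟨z, s, hs, he⟩
  choose z s hs hzs using hrep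
  set R := ∑ i, ‖z i‖
  refine ⟨ρ, hρ, R, by positivity, fun d T hT => ?_⟩
  have hvert : range b ⊆ {e | -(R * ‖A d‖ + T) ≤ ⟪d, e⟫_ℝ} := by
    rintro _ ⟨i, rfl⟩
    have hz : ‖z i‖ ≤ R := Finset.single_le_sum (fun j _ => norm_nonneg (z j)) (Finset.mem_univ i)
    have hAz := neg_le_of_abs_le (abs_real_inner_le_norm (A d) (z i))
    have hsd := hT _ (hs i)
    rw [mem_ofPred_eq, ← hzs i, inner_sub_right, adjoint_inner_right, real_inner_comm (s i)]
    nlinarith [norm_nonneg (A d)]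
  rcases eq_or_ne d 0 with rfl | hd
  · simpa using hT _ (hs 0)
  have hd' : ‖d‖ ≠ 0 := norm_ne_zero_iff.2 hd
  have hdir : -(ρ / ‖d‖) • d ∈ convexHull ℝ (range b) := by
    refine hball ?_
    rw [mem_closedBall_zero_iff, norm_smul, norm_neg, Real.norm_of_nonneg (by positivity),
      div_mul_cancel₀ _ hd']
  have hhull := convexHull_min hvert (convex_halfSpace_ge (innerₛₗ ℝ d).isLinear _) hdir
  rw [mem_ofPred_eq, real_inner_smul_right, real_inner_self_eq_norm_sq, pow_two,
    ← mul_assoc, neg_mul, neg_mul, div_mul_cancel₀ _ hd'] at hhull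
  linarith

theorem upper_lipschitz_of_strict_robinson_general
    (n m : ℕ) (J : EuclideanSpace ℝ (Fin n) → EReal)
    (hnonneg : ∀ x, 0 ≤ J x)
    (A : EuclideanSpace ℝ (Fin n) →L[ℝ] EuclideanSpace ℝ (Fin m))
    (b₀ y₀ : EuclideanSpace ℝ (Fin m))
    (x₀ : EuclideanSpace ℝ (Fin n)) (hfeas : A x₀ = b₀) (hfin : J x₀ < ⊤)
    (subJ : EuclideanSpace ℝ (Fin n) → Set (EuclideanSpace ℝ (Fin n)))
    (hsubJ : ∀ x, subJ x = {s | ∀ y, J x + ((⟪s, y - x⟫_ℝ : ℝ) : EReal) ≤ J y})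
    (hrobinson : (0 : EuclideanSpace ℝ (Fin n)) ∈
      interior {v | ∃ u ∈ Set.range (ContinuousLinearMap.adjoint A), ∃ s ∈ subJ x₀, v = u - s}) :
    ∃ κ > (0 : ℝ), ∃ ε > (0 : ℝ), ∀ v : EuclideanSpace ℝ (Fin n),
      ∀ w : EuclideanSpace ℝ (Fin m), ‖v‖ < ε → ‖w‖ < ε →
        ∀ x : EuclideanSpace ℝ (Fin n), v + ContinuousLinearMap.adjoint A y₀ ∈ subJ x →
          w = A x - b₀ → ‖x - x₀‖ ≤ κ * (‖v‖ + ‖w‖) := by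
  obtain rfl : subJ = subgradients J := funext hsubJ
  have hrobinson' : (0 : EuclideanSpace ℝ (Fin n)) ∈
      interior (range (adjoint A) - subgradients J x₀) := by
    convert hrobinson using 3
    ext
    simp only [Set.mem_sub, eq_comm, mem_ofPred_eq]
  obtain ⟨ρ, hρ, R, hR, hest⟩ :=
    exists_mul_norm_le_of_zero_mem_interior_range_adjoint_sub hrobinson'
  have hbot : J x₀ ≠ ⊥ := ne_bot_of_le_ne_bot EReal.zero_ne_bot (hnonneg x₀)
  refine ⟨2 * (R + ‖y₀‖ + 1) / ρ, by positivity, ρ / 2, by positivity,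
    fun v w hv _ x hx hw => ?_⟩
  have hAd : A (x - x₀) = w := by rw [map_sub, hfeas, hw]
  have hinner : ∀ s ∈ subgradients J x₀,
      ⟪s, x - x₀⟫_ℝ ≤ ‖v‖ * ‖x - x₀‖ + ‖y₀‖ * ‖w‖ := fun s hs => by
    have hmono := inner_sub_nonneg_of_mem_subgradients hbot hfin.ne hs hx
    rw [inner_sub_left, inner_add_left, adjoint_inner_left, hAd] at hmono
    linarith [real_inner_le_norm v (x - x₀), real_inner_le_norm y₀ w]
  have hρd := hest _ _ hinner
  rw [hAd] at hρd
  have hhalf : ρ / 2 * ‖x - x₀‖ ≤ (R + ‖y₀‖) * ‖w‖ := by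
    nlinarith [mul_le_mul_of_nonneg_right hv.le (norm_nonneg (x - x₀))]
  calc ‖x - x₀‖ ≤ 2 * (R + ‖y₀‖) / ρ * ‖w‖ := by
        rw [div_mul_eq_mul_div, le_div_iff₀ hρ]
        linarith
    _ ≤ 2 * (R + ‖y₀‖ + 1) / ρ * (‖v‖ + ‖w‖) := by
        gcongr 2 * ?_ / ρ * ?_ <;> linarith [norm_nonneg v]

/-- Let `J` be a lsc gauge, `x₀` feasible for `min {J x : Ax = b₀}`, and
`Aᵀy₀ ∈ ∂J(x₀)`. If the strict Robinson condition `0 ∈ int (Im Aᵀ - ∂J(x₀))` holds, then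
the solution mapping `S_{y₀}(v,w) = {x : v + Aᵀy₀ ∈ ∂J(x), w = Ax - b₀}` is upper
Lipschitzian at `(0,0)`. -/
theorem upper_lipschitz_of_strict_robinson
    (n m : ℕ) (J : EuclideanSpace ℝ (Fin n) → EReal)
    (hnonneg : ∀ x, 0 ≤ J x) (hzero : J 0 = 0)
    (hhomog : ∀ (α : ℝ), 0 < α → ∀ x, J (α • x) = (α : EReal) * J x)
    (hconvex : ∀ x y, ∀ a b : ℝ, 0 ≤ a → 0 ≤ b → a + b = 1 →
      J (a • x + b • y) ≤ (a : EReal) * J x + (b : EReal) * J y)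
    (hlsc : LowerSemicontinuous J)
    (A : EuclideanSpace ℝ (Fin n) →L[ℝ] EuclideanSpace ℝ (Fin m))
    (b₀ y₀ : EuclideanSpace ℝ (Fin m))
    (x₀ : EuclideanSpace ℝ (Fin n)) (hfeas : A x₀ = b₀) (hfin : J x₀ < ⊤)
    (subJ : EuclideanSpace ℝ (Fin n) → Set (EuclideanSpace ℝ (Fin n)))
    (hsubJ : ∀ x, subJ x = {s | ∀ y, J x + ((⟪s, y - x⟫_ℝ : ℝ) : EReal) ≤ J y})
    (hsub : ContinuousLinearMap.adjoint A y₀ ∈ subJ x₀)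
    (hrobinson : (0 : EuclideanSpace ℝ (Fin n)) ∈
      interior {v | ∃ u ∈ Set.range (ContinuousLinearMap.adjoint A), ∃ s ∈ subJ x₀, v = u - s}) :
    ∃ κ > (0 : ℝ), ∃ ε > (0 : ℝ), ∀ v : EuclideanSpace ℝ (Fin n),
      ∀ w : EuclideanSpace ℝ (Fin m), ‖v‖ < ε → ‖w‖ < ε →
        ∀ x : EuclideanSpace ℝ (Fin n), v + ContinuousLinearMap.adjoint A y₀ ∈ subJ x →
          w = A x - b₀ → ‖x - x₀‖ ≤ κ * (‖v‖ + ‖w‖) :=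
  upper_lipschitz_of_strict_robinson_general n m J hnonneg A b₀ y₀ x₀ hfeas hfin subJ hsubJ
    hrobinson
end
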